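/- The function φ(r) = (1/(24 W))(1/sin⁴ r + 2/sin² r - 4 log sin r) satisfies the ODE φ''(r) - φ'(r)·L(r) = 1/W on (0, π/2), where L(r) = -d/dr [ log(sin⁵ r · cos r) ] and W > 0 is any constant. -/

import Mathlib

/-!
With `ρ = sin⁵ r · cos r` one has `L = -ρ'/ρ`, so the ODE is the Sturm–Liouville equation
`(ρ φ')' = ρ / W`. For the given `φ` the flux is `ρ φ' = -cos² r (1 + sin² r + sin⁴ r) / (6W)
= (sin⁶ r - 1) / (6W)`, whose derivative is indeed `sin⁵ r cos r / W`.
-/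

open Set Real Filter Topology

theorem deriv_deriv_sub_mul_neg_deriv_log_eq_of_mul_deriv_eventuallyEq {φ ρ F : ℝ → ℝ} {r c : ℝ}
    (hρ : DifferentiableAt ℝ ρ r) (hρr : ρ r ≠ 0)
    (hflux : ∀ᶠ s in 𝓝 r, ρ s * deriv φ s = F s) (hF : HasDerivAt F (c * ρ r) r) :
    deriv (deriv φ) r - deriv φ r * -deriv (fun s => Real.log (ρ s)) r = c := by
  have hφ' : deriv φ =ᶠ[𝓝 r] fun s => F s / ρ s := by
    filter_upwards [hflux, hρ.continuousAt.eventually_ne hρr] with s hs hρs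
    rw [← hs]
    field_simp
  rw [hφ'.deriv_eq, hφ'.eq_of_nhds, (hF.fun_div hρ.hasDerivAt hρr).deriv,
    (hρ.hasDerivAt.log hρr).deriv, ← hflux.self_of_nhds]
  field_simp
  ring

theorem hasDerivAt_inv_sin_pow_four_add_two_div_sin_sq_sub_four_log_sin {s : ℝ} (hs : sin s ≠ 0) :
    HasDerivAt (fun r => 1 / sin r ^ 4 + 2 / sin r ^ 2 - 4 * Real.log (sin r))
      (-4 * (cos s * (1 / sin s ^ 5 + 1 / sin s ^ 3 + 1 / sin s))) s := by
  have h4 := (hasDerivAt_const s 1).fun_div ((hasDerivAt_sin s).fun_pow 4) (pow_ne_zero 4 hs)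
  have h2 := (hasDerivAt_const s 2).fun_div ((hasDerivAt_sin s).fun_pow 2) (pow_ne_zero 2 hs)
  have hlog := ((hasDerivAt_sin s).log hs).const_mul 4
  refine ((h4.fun_add h2).fun_sub hlog).congr_deriv ?_
  field_simp
  ring

theorem sin_pow_five_mul_cos_mul_cos_mul_inv_sum {s : ℝ} (hs : sin s ≠ 0) :
    sin s ^ 5 * cos s * (cos s * (1 / sin s ^ 5 + 1 / sin s ^ 3 + 1 / sin s)) = 1 - sin s ^ 6 := by
  field_simp
  linear_combination (1 + sin s ^ 2 + sin s ^ 4) * sin_sq_add_cos_sq s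

theorem stmt5_general (W : ℝ)
    (φ L : ℝ → ℝ)
    (hφ : ∀ r, φ r =
      (1 / (24 * W)) * (1 / Real.sin r ^ 4 + 2 / Real.sin r ^ 2
        - 4 * Real.log (Real.sin r)))
    (hL : ∀ r, L r = -(deriv (fun s => Real.log (Real.sin s ^ 5 * Real.cos s)) r)) :
    ∀ r ∈ Ioo 0 (π / 2),
      deriv (deriv φ) r - deriv φ r * L r = 1 / W := by
  intro r hr
  have hsin : 0 < sin r := sin_pos_of_pos_of_lt_pi hr.1 (by linarith [hr.2, pi_pos])
  have hcos : 0 < cos r := cos_pos_of_mem_Ioo ⟨by linarith [hr.1, pi_pos], hr.2⟩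
  have hderiv : ∀ s, sin s ≠ 0 →
      deriv φ s = 1 / (24 * W) * (-4 * (cos s * (1 / sin s ^ 5 + 1 / sin s ^ 3 + 1 / sin s))) :=
    fun s hs => funext hφ ▸
      ((hasDerivAt_inv_sin_pow_four_add_two_div_sin_sq_sub_four_log_sin hs).const_mul _).deriv
  rw [hL]
  refine deriv_deriv_sub_mul_neg_deriv_log_eq_of_mul_deriv_eventuallyEq
    (ρ := fun s => sin s ^ 5 * cos s) (F := fun s => (6 * W)⁻¹ * (sin s ^ 6 - 1))
    (by fun_prop) (by positivity) ?_ ?_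
  · filter_upwards [continuous_sin.continuousAt.eventually_ne hsin.ne'] with s hs
    rw [hderiv s hs]
    linear_combination (-(6 * W)⁻¹) * sin_pow_five_mul_cos_mul_cos_mul_inv_sum hs
  · refine ((((hasDerivAt_sin r).fun_pow 6).sub_const 1).const_mul (6 * W)⁻¹).congr_deriv ?_
    ring

/-- `φ(r) = (1/(24W))(1/sin⁴r + 2/sin²r - 4 log sin r)` satisfies
the ODE `φ''(r) - φ'(r)·L(r) = 1/W` on `(0, π/2)`, where
`L(r) = -(d/dr) log(sin⁵ r · cos r)` and `W > 0` is any constant. -/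
theorem stmt5 (W : ℝ) (hW : 0 < W)
    (φ L : ℝ → ℝ)
    (hφ : ∀ r, φ r =
      (1 / (24 * W)) * (1 / Real.sin r ^ 4 + 2 / Real.sin r ^ 2
        - 4 * Real.log (Real.sin r)))
    (hL : ∀ r, L r = -(deriv (fun s => Real.log (Real.sin s ^ 5 * Real.cos s)) r)) :
    ∀ r ∈ Ioo 0 (π / 2),
      deriv (deriv φ) r - deriv φ r * L r = 1 / W :=
  stmt5_general W φ L hφ hL
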